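/- arXiv:1312.0042 — 6 statements merged into one kernel-verified Lean document; each statement's English description precedes it below -/
import Mathlib

section
/- Let p > 0, 0 < a < p, 0 ≤ u < p, and L ≥ 0 be integers. Define f : ℕ → ℕ recursively by f(0) = u and f(i+1) = f(i) + a·⌈(p − f(i))/a⌉ − p. If m is the least index with f(m) ≤ L, then the least index d with (u + d·a) mod p ≤ L exists, satisfies (u + d·a) mod p = f(m), and equals d = (m·p − u + f(m))/a (in particular a divides m·p − u + f(m)). -/
/-!
Let `n i` be the index in the progression at which round `i` starts. By induction on `i`,
`u + n i * a = i * p + f i` with `f i < p`, so the progression reads `f i` at index `n i`.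
Inside round `i` the terms are `f i, f i + a, …`, all below `p` and hence unreduced, so none
is smaller than `f i`. The first term `≤ L` is therefore the first round start `f m ≤ L`,
reached at index `n m = (m * p - u + f m) / a`.
-/

lemma Nat.mul_ceilDiv_lt_add {a : ℕ} (ha : 0 < a) (b : ℕ) : a * (b ⌈/⌉ a) < b + a := by
  rw [Nat.ceilDiv_eq_add_pred_div]
  exact (Nat.mul_div_le _ a).trans_lt (by omega)

lemma Nat.mul_lt_of_lt_ceilDiv {a b k : ℕ} (ha : 0 < a) (hk : k < b ⌈/⌉ a) : a * k < b :=
  not_le.1 fun h ↦ hk.not_ge ((ceilDiv_le_iff_le_mul ha).2 h)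

lemma Nat.exists_le_lt_succ_of_lt {n : ℕ → ℕ} {d : ℕ} (h0 : n 0 ≤ d) :
    ∀ {M : ℕ}, d < n M → ∃ i < M, n i ≤ d ∧ d < n (i + 1)
  | 0, hd => absurd h0 hd.not_ge
  | M + 1, hd => by
    by_cases hM : d < n M
    · obtain ⟨i, hi, hle, hlt⟩ := exists_le_lt_succ_of_lt h0 hM
      exact ⟨i, hi.trans M.lt_succ_self, hle, hlt⟩
    · exact ⟨M, M.lt_succ_self, not_lt.1 hM, hd⟩

/-- Index `d` of the term `(u + d * a) % p` of the progression at which round `i` starts. -/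
def roundStart (p a : ℕ) (f : ℕ → ℕ) : ℕ → ℕ
  | 0 => 0
  | i + 1 => roundStart p a f i + (p - f i) ⌈/⌉ a

section RoundStarts

variable {p a u : ℕ} {f : ℕ → ℕ}

lemma lt_of_round_recurrence (ha : 0 < a) (hap : a < p) (hu : u < p) (hf0 : f 0 = u)
    (hfs : ∀ i, f (i + 1) = f i + a * ((p - f i) ⌈/⌉ a) - p) (i : ℕ) : f i < p := by
  induction i with
  | zero => exact hf0 ▸ hu
  | succ i ih =>
    have := Nat.mul_ceilDiv_lt_add ha (p - f i)
    rw [hfs]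
    omega

lemma add_roundStart_mul (ha : 0 < a) (hf0 : f 0 = u)
    (hfs : ∀ i, f (i + 1) = f i + a * ((p - f i) ⌈/⌉ a) - p) (i : ℕ) :
    u + roundStart p a f i * a = i * p + f i := by
  induction i with
  | zero => simp [roundStart, hf0]
  | succ i ih =>
    have hle : p - f i ≤ a * ((p - f i) ⌈/⌉ a) := le_smul_ceilDiv ha
    rw [roundStart, hfs, Nat.add_mul, ← add_assoc, ih, Nat.mul_comm _ a, Nat.succ_mul]
    omega

lemma mod_add_roundStart_add_mul (ha : 0 < a) (hf0 : f 0 = u)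
    (hfs : ∀ i, f (i + 1) = f i + a * ((p - f i) ⌈/⌉ a) - p) {i k : ℕ}
    (hk : k < (p - f i) ⌈/⌉ a) :
    (u + (roundStart p a f i + k) * a) % p = f i + a * k := by
  have hsum : u + (roundStart p a f i + k) * a = (f i + a * k) + i * p := by
    rw [Nat.add_mul, ← add_assoc, add_roundStart_mul ha hf0 hfs]
    ring
  have hlt := Nat.mul_lt_of_lt_ceilDiv ha hk
  rw [hsum, Nat.add_mul_mod_self_right, Nat.mod_eq_of_lt (by omega)]

lemma exists_le_mod_of_lt_roundStart (ha : 0 < a) (hf0 : f 0 = u)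
    (hfs : ∀ i, f (i + 1) = f i + a * ((p - f i) ⌈/⌉ a) - p) {d M : ℕ}
    (hd : d < roundStart p a f M) : ∃ i < M, f i ≤ (u + d * a) % p := by
  obtain ⟨i, hiM, hle, hlt⟩ := Nat.exists_le_lt_succ_of_lt (Nat.zero_le d) hd
  obtain ⟨k, rfl⟩ := Nat.exists_eq_add_of_le hle
  rw [roundStart, Nat.add_lt_add_iff_left] at hlt
  exact ⟨i, hiM, (mod_add_roundStart_add_mul ha hf0 hfs hlt).symm ▸ Nat.le_add_right _ _⟩

end RoundStarts

theorem stmt4_general (p a u L : ℕ) (ha : 0 < a) (hap : a < p) (hu : u < p)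
    (f : ℕ → ℕ) (hf0 : f 0 = u)
    (hfs : ∀ i, f (i + 1) = f i + a * ((p - f i) ⌈/⌉ a) - p)
    (m : ℕ) (hm : IsLeast {i : ℕ | f i ≤ L} m) :
    ∃ d : ℕ, IsLeast {i : ℕ | (u + i * a) % p ≤ L} d ∧
      (u + d * a) % p = f m ∧
      (a : ℤ) ∣ ((m : ℤ) * p - u + f m) ∧
      (d : ℤ) = ((m : ℤ) * p - u + f m) / a := by
  have hstart := add_roundStart_mul ha hf0 hfs m
  have hmod : (u + roundStart p a f m * a) % p = f m := by
    rw [hstart, Nat.add_comm, Nat.add_mul_mod_self_right,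
      Nat.mod_eq_of_lt (lt_of_round_recurrence ha hap hu hf0 hfs m)]
  have hint : (m : ℤ) * p - u + f m = roundStart p a f m * a := by
    have : (u : ℤ) + roundStart p a f m * a = m * p + f m := by exact_mod_cast hstart
    linarith
  refine ⟨roundStart p a f m, ⟨hmod.trans_le hm.1, fun d hd ↦ ?_⟩, hmod,
    hint ▸ dvd_mul_left _ _, by rw [hint, Int.mul_ediv_cancel _ (by exact_mod_cast ha.ne')]⟩
  by_contra! hlt
  obtain ⟨i, him, hi⟩ := exists_le_mod_of_lt_roundStart ha hf0 hfs hlt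
  exact (hm.2 (hi.trans hd)).not_gt him

/-- Let `p > 0`, `0 < a < p`, `0 ≤ u < p`, `L ≥ 0`. Define `f(0) = u` and
`f(i+1) = f(i) + a·⌈(p - f(i))/a⌉ - p`. If `m` is the least index with `f(m) ≤ L`, then
the least index `d` with `(u + d·a) mod p ≤ L` exists, satisfies
`(u + d·a) mod p = f(m)`, and equals `d = (m·p - u + f(m))/a`; in particular `a` divides
`m·p - u + f(m)`. -/
theorem stmt4 (p a u L : ℕ) (hp : 0 < p) (ha : 0 < a) (hap : a < p) (hu : u < p)
    (f : ℕ → ℕ) (hf0 : f 0 = u)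
    (hfs : ∀ i, f (i + 1) = f i + a * ((p - f i) ⌈/⌉ a) - p)
    (m : ℕ) (hm : IsLeast {i : ℕ | f i ≤ L} m) :
    ∃ d : ℕ, IsLeast {i : ℕ | (u + i * a) % p ≤ L} d ∧
      (u + d * a) % p = f m ∧
      (a : ℤ) ∣ ((m : ℤ) * p - u + f m) ∧
      (d : ℤ) = ((m : ℤ) * p - u + f m) / a :=
  stmt4_general p a u L ha hap hu f hf0 hfs m hm
end

section
/- Let p > 0 and 0 < a < p be integers, let v be an integer with 0 ≤ v < a, and let k = ⌈(p − v)/a⌉. Then v + k·a ≥ p and v + k·a − p = (v + (a − (p mod a))) mod a. (In other words, the successive round-start values of the arithmetic progression modulo p with common difference a form an arithmetic progression over Z_a with common difference a − r, where r = p mod a.) -/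
/-!
The multiple `k * a` with `k = ⌈(p - v)/a⌉` is the least multiple of `a` that is at least
`p - v`, so the overshoot `v + k * a - p` lies in `[0, a)`. It is also congruent to
`v - p ≡ v + (a - p % a)` modulo `a`, hence equals the residue of the latter.
-/

namespace Nat

theorem le_ceilDiv_mul {a : ℕ} (ha : 0 < a) (n : ℕ) : n ≤ n ⌈/⌉ a * a := by
  simpa [mul_comm] using le_smul_ceilDiv (b := n) ha

theorem ceilDiv_mul_lt_add {a : ℕ} (ha : 0 < a) (n : ℕ) : n ⌈/⌉ a * a < n + a := by
  have := Nat.div_mul_le_self (n + a - 1) a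
  rw [ceilDiv_eq_add_pred_div]
  omega

theorem eq_mod_of_add_mod_eq {a d p v : ℕ} (hd : d < a) (h : (d + p) % a = v % a) :
    d = (v + (a - p % a)) % a := by
  have hp : p % a + a * (p / a) = p := Nat.mod_add_div p a
  have hr : p % a < a := Nat.mod_lt p (by omega)
  have hsum : d + p + (a - p % a) = d + a * (p / a + 1) := by
    rw [Nat.mul_succ]
    omega
  rw [← Nat.mod_add_mod, ← h, Nat.mod_add_mod, hsum, Nat.add_mul_mod_self_left,
    Nat.mod_eq_of_lt hd]

section Overshoot

variable {p a v : ℕ}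

theorem le_add_ceilDiv_sub_mul (ha : 0 < a) : p ≤ v + (p - v) ⌈/⌉ a * a := by
  have := le_ceilDiv_mul ha (p - v)
  omega

theorem add_ceilDiv_sub_mul_sub_lt (hv : v < a) : v + (p - v) ⌈/⌉ a * a - p < a := by
  have := ceilDiv_mul_lt_add (v.zero_le.trans_lt hv) (p - v)
  rcases le_or_gt v p with hvp | hpv
  · omega
  · simp only [Nat.sub_eq_zero_of_le hpv.le, zero_ceilDiv, zero_mul]
    omega

end Overshoot

end Nat

theorem stmt5_general (p a v : ℕ) (hv : v < a) :
    p ≤ v + ((p - v) ⌈/⌉ a) * a ∧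
      v + ((p - v) ⌈/⌉ a) * a - p = (v + (a - p % a)) % a := by
  have ha : 0 < a := v.zero_le.trans_lt hv
  have hle : p ≤ v + (p - v) ⌈/⌉ a * a := Nat.le_add_ceilDiv_sub_mul ha
  refine ⟨hle, Nat.eq_mod_of_add_mod_eq (Nat.add_ceilDiv_sub_mul_sub_lt hv) ?_⟩
  rw [Nat.sub_add_cancel hle, Nat.add_mul_mod_self_right]

/-- Let `p > 0`, `0 < a < p` and `0 ≤ v < a`, and let `k = ⌈(p - v)/a⌉`. Then
`v + k·a ≥ p` and `v + k·a - p = (v + (a - (p mod a))) mod a`. -/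
theorem stmt5 (p a v : ℕ) (hp : 0 < p) (ha : 0 < a) (hap : a < p) (hv : v < a) :
    p ≤ v + ((p - v) ⌈/⌉ a) * a ∧
      v + ((p - v) ⌈/⌉ a) * a - p = (v + (a - p % a)) % a :=
  stmt5_general p a v hv
end

section
/- Let p > 0, 0 < a < p, 0 ≤ u < p, and L ≥ 0 be integers. Then {i ≥ 0 : (u + i·a) mod p ≤ L} = {i ≥ 0 : ((p − u + L) mod p + i·(p − a)) mod p ≤ L}. Consequently, the least element d of the first set exists if and only if the least element d′ of the second set exists, and in that case d = d′. -/
/-! Write `v = (u + i·a) mod p`. Since `u + i·a ≡ v`, the second progression satisfies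
`(p - u + L) + i·(p - a) ≡ L - v (mod p)`, i.e. it is the first one reflected about `L`. For
`v < p` the residue of `L - v` is `L - v` itself when `v ≤ L` and `p + L - v > L` otherwise, so
both residues are `≤ L` for exactly the same `i`. -/

namespace Nat

theorem add_sub_mod_le_iff {p L v : ℕ} (hv : v < p) : (p + L - v) % p ≤ L ↔ v ≤ L := by
  rcases le_or_gt v L with hvL | hLv
  · rw [show p + L - v = L - v + p by omega, add_mod_right]
    exact ⟨fun _ => hvL, fun _ => (mod_le _ _).trans (sub_le L v)⟩
  · rw [mod_eq_of_lt (by omega)]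
    omega

theorem sub_add_mul_sub_modEq {p a u : ℕ} (hu : u < p) (ha : a ≤ p) (L i : ℕ) :
    p - u + L + i * (p - a) ≡ p + L - (u + i * a) % p [MOD p] := by
  refine ModEq.add_right_cancel' (u + i * a) ?_
  have hv : (u + i * a) % p ≤ p := (mod_lt _ (zero_lt_of_lt hu)).le
  have hia : i * (p - a) + i * a = p * i := by
    rw [← mul_add, Nat.sub_add_cancel ha, mul_comm]
  calc p - u + L + i * (p - a) + (u + i * a) = L + p * (1 + i) := by
        rw [mul_add, mul_one, ← hia]
        omega
    _ ≡ L [MOD p] := add_modEq_left_iff.mpr (dvd_mul_right p _)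
    _ ≡ p + L - (u + i * a) % p + (u + i * a) % p [MOD p] := by
        rw [Nat.sub_add_cancel (by omega), add_comm]
        exact (add_modEq_left_iff.mpr dvd_rfl).symm
    _ ≡ p + L - (u + i * a) % p + (u + i * a) [MOD p] :=
        ModEq.add_left _ (mod_modEq _ _)

end Nat

theorem stmt6_general (p a u L : ℕ) (hap : a < p) (hu : u < p) :
    {i : ℕ | (u + i * a) % p ≤ L} =
        {i : ℕ | ((p - u + L) % p + i * (p - a)) % p ≤ L} ∧
      ∀ d : ℕ, IsLeast {i : ℕ | (u + i * a) % p ≤ L} d ↔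
        IsLeast {i : ℕ | ((p - u + L) % p + i * (p - a)) % p ≤ L} d := by
  have hsets : {i : ℕ | (u + i * a) % p ≤ L} =
      {i : ℕ | ((p - u + L) % p + i * (p - a)) % p ≤ L} := by
    ext i
    rw [Set.mem_ofPred_eq, Set.mem_ofPred_eq, Nat.mod_add_mod,
      Nat.sub_add_mul_sub_modEq hu hap.le L i,
      Nat.add_sub_mod_le_iff (Nat.mod_lt _ (Nat.zero_lt_of_lt hu))]
  exact ⟨hsets, fun d => by rw [hsets]⟩

/-- Let `p > 0`, `0 < a < p`, `0 ≤ u < p`, and `L ≥ 0` be integers. Then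
`{i ≥ 0 : (u + i·a) mod p ≤ L} = {i ≥ 0 : ((p - u + L) mod p + i·(p - a)) mod p ≤ L}`.
Consequently the least element of the first set exists iff the least element of the
second set exists, and in that case they are equal. -/
theorem stmt6 (p a u L : ℕ) (hp : 0 < p) (ha : 0 < a) (hap : a < p) (hu : u < p) :
    {i : ℕ | (u + i * a) % p ≤ L} =
        {i : ℕ | ((p - u + L) % p + i * (p - a)) % p ≤ L} ∧
      ∀ d : ℕ, IsLeast {i : ℕ | (u + i * a) % p ≤ L} d ↔
        IsLeast {i : ℕ | ((p - u + L) % p + i * (p - a)) % p ≤ L} d :=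
  stmt6_general p a u L hap hu
end

section
/- Let p be a prime, S a finite set of residues in Z_p with |S| = U, ℓ a natural number with 2^ℓ ≤ p, and t = ⌊p/2^ℓ⌋. Choose (a, b) uniformly at random from {1, …, p−1} × {0, …, p−1} and let X = #{x ∈ S : (a·x + b) mod p < t}. Then Var[X] ≤ E[X]. -/
/-- The set of hash-function parameter pairs `(a, b) ∈ {1, …, p-1} × {0, …, p-1}`,
viewed inside `Z_p × Z_p`. -/
def hashPairs (p : ℕ) [Fact p.Prime] : Finset (ZMod p × ZMod p) :=
  Finset.univ.filter (fun ab : ZMod p × ZMod p => ab.1 ≠ 0)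

/-- `X = #{x ∈ S : (a·x + b) mod p < t}`, the number of elements of `S` selected by the
level-`ℓ` coordinated sample with threshold `t` under the hash function `(a, b)`. -/
def sampleCount (p : ℕ) [Fact p.Prime] (S : Finset (ZMod p)) (t : ℕ)
    (ab : ZMod p × ZMod p) : ℕ :=
  (S.filter (fun x => (ab.1 * x + ab.2).val < t)).card

/-- Expectation of `g` under the uniform distribution on `hashPairs p`
(which has `p·(p-1)` elements). -/
noncomputable def hashExpect (p : ℕ) [Fact p.Prime] (g : ZMod p × ZMod p → ℝ) : ℝ :=
  (∑ ab ∈ hashPairs p, g ab) / ((p : ℝ) * ((p : ℝ) - 1))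

/-!
Write `X = ∑ x ∈ S, I x`, where `I x` indicates that `x` hashes into `T = {u | u.val < t}`. Then
`Var X = ∑ x, Var (I x) + ∑ x ≠ y, Cov (I x) (I y)`, and `Var (I x) ≤ E (I x)` since `I x² = I x`.
For `x ≠ y` the map `(a, b) ↦ (a x + b, a y + b)` is a bijection from `{a ≠ 0} × Z_p` onto the
pairs `(u, v)` with `u ≠ v`, so `P(I x = I y = 1) = |T| (|T| - 1) / (p (p - 1)) ≤ (|T| / p)²`:
the covariances are non-positive, and `Var X ≤ ∑ x, E (I x) = E X`.
-/

open Finset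
open scoped BigOperators

namespace Finset

variable {ι κ : Type*} {s : Finset ι}

lemma expect_sub_expect_sq (hs : s.Nonempty) (f : ι → ℝ) :
    𝔼 i ∈ s, (f i - 𝔼 j ∈ s, f j) ^ 2 = 𝔼 i ∈ s, f i ^ 2 - (𝔼 i ∈ s, f i) ^ 2 := by
  set m := 𝔼 j ∈ s, f j
  calc 𝔼 i ∈ s, (f i - m) ^ 2 = 𝔼 i ∈ s, (f i ^ 2 - 2 * m * f i + m ^ 2) :=
        expect_congr rfl fun i _ => by ring
    _ = 𝔼 i ∈ s, f i ^ 2 - 2 * m * m + m ^ 2 := by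
        rw [expect_add_distrib, expect_sub_distrib, ← mul_expect, expect_const hs]
    _ = 𝔼 i ∈ s, f i ^ 2 - m ^ 2 := by ring

lemma expect_sum_sub_expect_sq (hs : s.Nonempty) (t : Finset κ) (f : κ → ι → ℝ) :
    𝔼 i ∈ s, (∑ k ∈ t, f k i - 𝔼 j ∈ s, ∑ k ∈ t, f k j) ^ 2 =
      ∑ k ∈ t, ∑ l ∈ t, (𝔼 i ∈ s, f k i * f l i - (𝔼 i ∈ s, f k i) * 𝔼 i ∈ s, f l i) := by
  rw [expect_sub_expect_sq hs]
  simp only [sq, sum_mul_sum, expect_sum_comm, ← sum_sub_distrib]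

lemma expect_sum_sub_expect_sq_le (hs : s.Nonempty) (t : Finset κ) (f : κ → ι → ℝ)
    (hf : ∀ k ∈ t, ∀ i ∈ s, f k i * f k i = f k i)
    (hcov : ∀ k ∈ t, ∀ l ∈ t, k ≠ l →
      𝔼 i ∈ s, f k i * f l i ≤ (𝔼 i ∈ s, f k i) * 𝔼 i ∈ s, f l i) :
    𝔼 i ∈ s, (∑ k ∈ t, f k i - 𝔼 j ∈ s, ∑ k ∈ t, f k j) ^ 2 ≤ 𝔼 i ∈ s, ∑ k ∈ t, f k i := by
  classical
  rw [expect_sum_sub_expect_sq hs, expect_sum_comm]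
  refine sum_le_sum fun k hk => ?_
  rw [← add_sum_erase t _ hk, expect_congr rfl (hf k hk)]
  have hoff : ∑ l ∈ t.erase k,
      (𝔼 i ∈ s, f k i * f l i - (𝔼 i ∈ s, f k i) * 𝔼 i ∈ s, f l i) ≤ 0 :=
    sum_nonpos fun l hl =>
      sub_nonpos.2 (hcov k hk l (mem_of_mem_erase hl) (ne_of_mem_erase hl).symm)
  nlinarith [mul_self_nonneg (𝔼 i ∈ s, f k i)]

end Finset

section HashFamily

variable {p : ℕ} [Fact p.Prime]

lemma hashPairs_eq : hashPairs p = univ.erase 0 ×ˢ univ := by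
  ext ⟨a, b⟩
  simp [hashPairs]

lemma hashPairs_nonempty : (hashPairs p).Nonempty :=
  ⟨(1, 0), by simp [hashPairs]⟩

lemma cast_card_hashPairs : (#(hashPairs p) : ℝ) = p * (p - 1) := by
  rw [hashPairs_eq, card_product, card_erase_of_mem (mem_univ _), card_univ, ZMod.card,
    Nat.cast_mul, Nat.cast_pred (Fact.out : p.Prime).pos, mul_comm]

lemma hashExpect_eq_expect (g : ZMod p × ZMod p → ℝ) :
    hashExpect p g = 𝔼 ab ∈ hashPairs p, g ab := by
  rw [expect_eq_sum_div_card, cast_card_hashPairs, hashExpect]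

def hashHit (T : Finset (ZMod p)) (x : ZMod p) (ab : ZMod p × ZMod p) : ℝ :=
  if ab.1 * x + ab.2 ∈ T then 1 else 0

lemma hashHit_mul_self (T : Finset (ZMod p)) (x : ZMod p) (ab : ZMod p × ZMod p) :
    hashHit T x ab * hashHit T x ab = hashHit T x ab := by
  unfold hashHit
  split_ifs <;> norm_num

lemma card_filter_hashPairs_mem (T : Finset (ZMod p)) (x : ZMod p) :
    #{ab ∈ hashPairs p | ab.1 * x + ab.2 ∈ T} = #((univ : Finset (ZMod p)).erase 0 ×ˢ T) := by
  refine card_nbij' (fun ab => (ab.1, ab.1 * x + ab.2)) (fun au => (au.1, au.2 - au.1 * x))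
    ?_ ?_ ?_ ?_ <;> intro _ <;> simp [hashPairs]

lemma card_filter_hashPairs_mem_and_mem (T : Finset (ZMod p)) {x y : ZMod p} (hxy : x ≠ y) :
    #{ab ∈ hashPairs p | ab.1 * x + ab.2 ∈ T ∧ ab.1 * y + ab.2 ∈ T} = #T.offDiag := by
  have hxy' : x - y ≠ 0 := sub_ne_zero.2 hxy
  refine card_nbij' (fun ab => (ab.1 * x + ab.2, ab.1 * y + ab.2))
    (fun uv => ((uv.1 - uv.2) / (x - y), (uv.2 * x - uv.1 * y) / (x - y))) ?_ ?_ ?_ ?_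
  · rintro ⟨a, b⟩ hab
    simp only [hashPairs, mem_coe, mem_filter, mem_univ, true_and, mem_offDiag] at hab ⊢
    obtain ⟨ha, hx, hy⟩ := hab
    refine ⟨hx, hy, fun h => mul_ne_zero ha hxy' ?_⟩
    linear_combination h
  · rintro ⟨u, v⟩ huv
    simp only [hashPairs, mem_coe, mem_filter, mem_univ, true_and, mem_offDiag] at huv ⊢
    obtain ⟨hu, hv, hne⟩ := huv
    have hx : (u - v) / (x - y) * x + (v * x - u * y) / (x - y) = u := by field_simp; ring
    have hy : (u - v) / (x - y) * y + (v * x - u * y) / (x - y) = v := by field_simp; ring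
    exact ⟨div_ne_zero (sub_ne_zero.2 hne) hxy', hx.symm ▸ hu, hy.symm ▸ hv⟩
  · rintro ⟨a, b⟩ -
    simp only [Prod.mk.injEq]
    constructor <;> field_simp <;> ring
  · rintro ⟨u, v⟩ -
    simp only [Prod.mk.injEq]
    constructor <;> field_simp <;> ring

lemma expect_hashHit (T : Finset (ZMod p)) (x : ZMod p) :
    𝔼 ab ∈ hashPairs p, hashHit T x ab = #T / p := by
  have hp : (p : ℝ) - 1 ≠ 0 := sub_ne_zero.2 (by exact_mod_cast (Fact.out : p.Prime).one_lt.ne')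
  rw [expect_eq_sum_div_card, cast_card_hashPairs]
  simp only [hashHit, sum_boole]
  rw [card_filter_hashPairs_mem, card_product, card_erase_of_mem (mem_univ _), card_univ,
    ZMod.card, Nat.cast_mul, Nat.cast_pred (Fact.out : p.Prime).pos]
  field_simp

lemma expect_hashHit_mul_hashHit (T : Finset (ZMod p)) {x y : ZMod p} (hxy : x ≠ y) :
    𝔼 ab ∈ hashPairs p, hashHit T x ab * hashHit T y ab = #T * (#T - 1) / (p * (p - 1)) := by
  rw [expect_eq_sum_div_card, cast_card_hashPairs]
  simp only [hashHit, ite_zero_mul_ite_zero, mul_one, sum_boole]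
  rw [card_filter_hashPairs_mem_and_mem T hxy, offDiag_card, Nat.cast_sub (Nat.le_mul_self _)]
  push_cast
  ring

lemma expect_hashHit_mul_hashHit_le (T : Finset (ZMod p)) {x y : ZMod p} (hxy : x ≠ y) :
    𝔼 ab ∈ hashPairs p, hashHit T x ab * hashHit T y ab ≤
      (𝔼 ab ∈ hashPairs p, hashHit T x ab) * 𝔼 ab ∈ hashPairs p, hashHit T y ab := by
  have hT : (#T : ℝ) ≤ p := by exact_mod_cast (card_le_univ T).trans_eq (ZMod.card p)
  have hp : (1 : ℝ) < p := by exact_mod_cast (Fact.out : p.Prime).one_lt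
  rw [expect_hashHit_mul_hashHit T hxy, expect_hashHit, expect_hashHit, div_mul_div_comm,
    div_le_div_iff₀ (by nlinarith) (by positivity)]
  nlinarith [mul_nonneg (mul_nonneg (#T).cast_nonneg (by positivity : (0 : ℝ) ≤ p))
    (sub_nonneg.2 hT)]

lemma sampleCount_eq_sum_hashHit (S : Finset (ZMod p)) (t : ℕ) (ab : ZMod p × ZMod p) :
    (sampleCount p S t ab : ℝ) = ∑ x ∈ S, hashHit {u | u.val < t} x ab := by
  simp only [sampleCount, hashHit, mem_filter, mem_univ, true_and, sum_boole]

end HashFamily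

theorem stmt11_general (p : ℕ) [Fact p.Prime] (S : Finset (ZMod p)) (t : ℕ) :
    hashExpect p (fun ab =>
        ((sampleCount p S t ab : ℝ)
          - hashExpect p (fun ab' => (sampleCount p S t ab' : ℝ))) ^ 2)
      ≤ hashExpect p (fun ab => (sampleCount p S t ab : ℝ)) := by
  simp only [hashExpect_eq_expect, sampleCount_eq_sum_hashHit]
  exact expect_sum_sub_expect_sq_le hashPairs_nonempty S _ (fun _ _ _ _ => hashHit_mul_self ..)
    fun _ _ _ _ hxy => expect_hashHit_mul_hashHit_le _ hxy

/-- Let `p` be a prime, `S` a finite set of residues in `Z_p` with `|S| = U`, `ℓ` a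
natural number with `2^ℓ ≤ p`, and `t = ⌊p/2^ℓ⌋`. Choose `(a, b)` uniformly from
`{1, …, p-1} × {0, …, p-1}` and let `X = #{x ∈ S : (a·x + b) mod p < t}`. Then
`Var[X] ≤ E[X]`. -/
theorem stmt11 (p : ℕ) [Fact p.Prime] (S : Finset (ZMod p)) (U : ℕ) (hS : S.card = U)
    (ℓ : ℕ) (hℓ : 2 ^ ℓ ≤ p) (t : ℕ) (ht : t = p / 2 ^ ℓ) :
    hashExpect p (fun ab =>
        ((sampleCount p S t ab : ℝ)
          - hashExpect p (fun ab' => (sampleCount p S t ab' : ℝ))) ^ 2)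
      ≤ hashExpect p (fun ab => (sampleCount p S t ab : ℝ)) :=
  stmt11_general p S t
end

section
/- Let p be a prime, S a finite set of residues in Z_p with |S| = U ≥ 1, ℓ a natural number with 2^ℓ ≤ p, t = ⌊p/2^ℓ⌋, and P_ℓ = t/p. Choose (a, b) uniformly at random from {1, …, p−1} × {0, …, p−1} and let X = #{x ∈ S : (a·x + b) mod p < t}. Then for every ε > 0, Pr[|X/P_ℓ − U| > ε·U] ≤ 2^{ℓ+1}/(ε²·U). -/
open scoped Classical in
/-- Probability of the event `A` under the uniform distribution on `hashPairs p`
(which has `p·(p-1)` elements). -/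
noncomputable def hashProb (p : ℕ) [Fact p.Prime] (A : ZMod p × ZMod p → Prop) : ℝ :=
  (((hashPairs p).filter A).card : ℝ) / ((p : ℝ) * ((p : ℝ) - 1))

/-!
For `a ≠ 0` and `x ≠ y` the map `(a, b) ↦ (a·x + b, a·y + b)` is a bijection from the hash
pairs onto the pairs of distinct field elements. Hence, in a field with `q` elements, every
location is selected by exactly `(q - 1)·|R|` hash pairs and two distinct locations jointly by
exactly `|R|·(|R| - 1)`: the selection indicators are negatively correlated, so the variance of
`X` is at most its mean `U·P`. Chebyshev's inequality gives `Pr[|X/P - U| > εU] ≤ 1/(ε²·U·P)`,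
and `1/P ≤ 2^(ℓ+1)` because `p < (⌊p/2^ℓ⌋ + 1)·2^ℓ ≤ 2·⌊p/2^ℓ⌋·2^ℓ`.
-/

open Finset

namespace Finset

lemma card_filter_mul_sq_le_sum_sq_sub {ι : Type*} {Ω : Finset ι} {A : ι → Prop}
    [DecidablePred A] {f : ι → ℝ} {μ δ : ℝ} (hδ : 0 ≤ δ)
    (hA : ∀ i ∈ Ω, A i → δ ≤ |f i - μ|) :
    #{i ∈ Ω | A i} * δ ^ 2 ≤ ∑ i ∈ Ω, (f i - μ) ^ 2 := calc
  (#{i ∈ Ω | A i} : ℝ) * δ ^ 2 = ∑ i ∈ Ω with A i, δ ^ 2 := by rw [sum_const, nsmul_eq_mul]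
  _ ≤ ∑ i ∈ Ω with A i, (f i - μ) ^ 2 := sum_le_sum fun i hi => by
    obtain ⟨hiΩ, hiA⟩ := mem_filter.1 hi
    rw [← sq_abs (f i - μ)]
    exact pow_le_pow_left₀ hδ (hA i hiΩ hiA) 2
  _ ≤ ∑ i ∈ Ω, (f i - μ) ^ 2 :=
    sum_le_sum_of_subset_of_nonneg (filter_subset _ _) fun _ _ _ => sq_nonneg _

lemma sq_card_eq_card_add_card_offDiag {α : Type*} (s : Finset α) :
    #s ^ 2 = #s + #s.offDiag := by
  rw [offDiag_card, sq]
  have := Nat.le_mul_self #s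
  omega

lemma offDiag_filter {α : Type*} (s : Finset α) (P : α → Prop) [DecidablePred P] :
    (s.filter P).offDiag = s.offDiag.filter (fun xy => P xy.1 ∧ P xy.2) := by
  ext; simp only [mem_offDiag, mem_filter]; tauto

lemma sum_card_filter_comm {α β : Type*} (s : Finset α) (t : Finset β) (r : α → β → Prop)
    [∀ a b, Decidable (r a b)] : ∑ a ∈ s, #{b ∈ t | r a b} = ∑ b ∈ t, #{a ∈ s | r a b} :=
  sum_card_bipartiteAbove_eq_sum_card_bipartiteBelow r

end Finset

lemma ZMod.card_filter_val_lt (n t : ℕ) [NeZero n] : #{c : ZMod n | c.val < t} = min n t := by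
  obtain ⟨n, rfl⟩ : ∃ m, n = m + 1 := Nat.exists_eq_succ_of_ne_zero (NeZero.ne n)
  exact Fin.card_filter_val_lt

lemma Nat.le_two_mul_mul_div {m n : ℕ} (hn : 0 < n) (hnm : n ≤ m) : m ≤ 2 * n * (m / n) := by
  have hdiv := Nat.div_add_mod m n
  have hmod := Nat.mod_lt m hn
  have hq : 1 ≤ m / n := (Nat.one_le_div_iff hn).2 hnm
  nlinarith

section AffineHash

variable {F : Type*} [Field F] [Fintype F] [DecidableEq F]

variable (F) in
def affineHashPairs : Finset (F × F) := {ab | ab.1 ≠ 0}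

lemma card_affineHashPairs_filter_mem (s : Finset F) (x : F) :
    #{ab ∈ affineHashPairs F | ab.1 * x + ab.2 ∈ s} = (Fintype.card F - 1) * #s := by
  have hunits : #{a : F | a ≠ 0} = Fintype.card F - 1 := by
    rw [filter_ne', card_erase_of_mem (mem_univ _), card_univ]
  rw [← hunits, ← card_product]
  refine card_nbij' (fun ab => (ab.1, ab.1 * x + ab.2)) (fun ac => (ac.1, ac.2 - ac.1 * x))
    ?_ ?_ ?_ ?_ <;> intro ab <;> simp [affineHashPairs]

lemma card_affineHashPairs_filter_mem_and_mem (s : Finset F) {x y : F} (hxy : x ≠ y) :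
    #{ab ∈ affineHashPairs F | ab.1 * x + ab.2 ∈ s ∧ ab.1 * y + ab.2 ∈ s} = #s.offDiag := by
  have hxy' : x - y ≠ 0 := sub_ne_zero.2 hxy
  have hv (u v : F) : (u - v) / (x - y) * y + (u - (u - v) / (x - y) * x) = v := by
    field_simp; ring
  refine card_nbij' (fun ab => (ab.1 * x + ab.2, ab.1 * y + ab.2))
    (fun uv => ((uv.1 - uv.2) / (x - y), uv.1 - (uv.1 - uv.2) / (x - y) * x)) ?_ ?_ ?_ ?_
  · intro ab hab
    simp_all [affineHashPairs]
  · intro uv huv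
    simp_all [affineHashPairs, sub_eq_zero]
  · intro ab hab
    ext <;> field_simp <;> ring
  · intro uv huv
    ext <;> simp [hv]

lemma card_affineHashPairs : #(affineHashPairs F) = (Fintype.card F - 1) * Fintype.card F := by
  simpa using card_affineHashPairs_filter_mem (univ : Finset F) 0

lemma sum_card_filter_affine_mem (s S : Finset F) :
    ∑ ab ∈ affineHashPairs F, #{x ∈ S | ab.1 * x + ab.2 ∈ s}
      = #S * ((Fintype.card F - 1) * #s) := by
  simp [sum_card_filter_comm, card_affineHashPairs_filter_mem]

lemma sum_sq_card_filter_affine_mem (s S : Finset F) :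
    ∑ ab ∈ affineHashPairs F, #{x ∈ S | ab.1 * x + ab.2 ∈ s} ^ 2
      = #S * ((Fintype.card F - 1) * #s) + #S.offDiag * #s.offDiag := by
  simp_rw [sq_card_eq_card_add_card_offDiag, sum_add_distrib, sum_card_filter_affine_mem,
    offDiag_filter]
  congr 1
  rw [sum_card_filter_comm, sum_congr rfl fun xy hxy =>
    card_affineHashPairs_filter_mem_and_mem s (mem_offDiag.1 hxy).2.2, sum_const, smul_eq_mul]

lemma sum_sq_card_filter_affine_mem_sub_le (s S : Finset F) :
    ∑ ab ∈ affineHashPairs F,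
        ((#{x ∈ S | ab.1 * x + ab.2 ∈ s} : ℝ) - #S * #s / Fintype.card F) ^ 2
      ≤ (Fintype.card F - 1) * #S * #s := by
  have hq : 1 ≤ Fintype.card F := Fintype.card_pos
  have hq0 : (0 : ℝ) < Fintype.card F := by exact_mod_cast hq
  have hsq : (#s : ℝ) ≤ Fintype.card F := by exact_mod_cast card_le_univ s
  have hoff (T : Finset F) : (#T.offDiag : ℝ) = #T * (#T - 1) := by
    rw [offDiag_card, Nat.cast_sub (Nat.le_mul_self _)]; push_cast; ring
  have hcard : (#(affineHashPairs F) : ℝ) = (Fintype.card F - 1) * Fintype.card F := by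
    rw [card_affineHashPairs, Nat.cast_mul, Nat.cast_sub hq, Nat.cast_one]
  have hmean := congrArg (Nat.cast (R := ℝ)) (sum_card_filter_affine_mem s S)
  have hmoment := congrArg (Nat.cast (R := ℝ)) (sum_sq_card_filter_affine_mem s S)
  push_cast [Nat.cast_sub hq, hoff] at hmean hmoment
  simp only [sub_sq, sum_add_distrib, sum_sub_distrib, ← sum_mul, ← mul_sum, sum_const,
    nsmul_eq_mul, hmean, hmoment, hcard]
  have hDs : (0 : ℝ) ≤ #s * (#s - 1) := by rw [← hoff]; positivity
  field_simp
  -- `q·((q-1)·U·t - Var) = U²·t·(q - t) + q·U·t·(t - 1)` with `q = |F|`, `U = |S|`, `t = |s|`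
  nlinarith [mul_nonneg (mul_nonneg (sq_nonneg (#S : ℝ)) (Nat.cast_nonneg #s))
      (sub_nonneg.2 hsq), mul_nonneg (mul_nonneg hq0.le (Nat.cast_nonneg #S)) hDs]

lemma card_filter_lt_abs_div_sub_mul_le {s S : Finset F} (hs : s.Nonempty) (hS : S.Nonempty)
    {ε : ℝ} (hε : 0 ≤ ε) :
    #{ab ∈ affineHashPairs F |
        ε * #S < |(#{x ∈ S | ab.1 * x + ab.2 ∈ s} : ℝ) / (#s / Fintype.card F) - #S|}
      * (ε ^ 2 * #S * (#s / Fintype.card F)) ≤ (Fintype.card F - 1) * Fintype.card F := by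
  set P : ℝ := #s / Fintype.card F
  have hP : 0 < P := by positivity
  have hU : (0 : ℝ) < #S := by exact_mod_cast hS.card_pos
  have hcheb := card_filter_mul_sq_le_sum_sq_sub (Ω := affineHashPairs F)
    (A := fun ab => ε * #S < |(#{x ∈ S | ab.1 * x + ab.2 ∈ s} : ℝ) / P - #S|)
    (f := fun ab => #{x ∈ S | ab.1 * x + ab.2 ∈ s}) (μ := #S * P) (δ := ε * #S * P)
    (by positivity) fun ab _ hab => by
      rw [show (#{x ∈ S | ab.1 * x + ab.2 ∈ s} : ℝ) - #S * P
          = ((#{x ∈ S | ab.1 * x + ab.2 ∈ s} : ℝ) / P - #S) * P by field_simp,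
        abs_mul, abs_of_pos hP]
      exact mul_le_mul_of_nonneg_right hab.le hP.le
  have hvar := sum_sq_card_filter_affine_mem_sub_le s S
  simp only [mul_div_assoc] at hvar
  refine le_of_mul_le_mul_right ?_ (mul_pos hU hP)
  calc _ = _ * (ε * #S * P) ^ 2 := by ring
    _ ≤ (Fintype.card F - 1) * #S * #s := hcheb.trans hvar
    _ = _ := by simp only [P]; field_simp

end AffineHash

/-- Let `p` be a prime, `S` a finite set of residues in `Z_p` with `|S| = U ≥ 1`, `ℓ` a
natural number with `2^ℓ ≤ p`, `t = ⌊p/2^ℓ⌋`, and `P_ℓ = t/p`. Choose `(a, b)` uniformly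
from `{1, …, p-1} × {0, …, p-1}` and let `X = #{x ∈ S : (a·x + b) mod p < t}`. Then for
every `ε > 0`, `Pr[|X/P_ℓ - U| > ε·U] ≤ 2^(ℓ+1)/(ε²·U)`. -/
theorem stmt12 (p : ℕ) [Fact p.Prime] (S : Finset (ZMod p)) (U : ℕ) (hS : S.card = U)
    (hU : 1 ≤ U) (ℓ : ℕ) (hℓ : 2 ^ ℓ ≤ p) (t : ℕ) (ht : t = p / 2 ^ ℓ)
    (Pℓ : ℝ) (hP : Pℓ = (t : ℝ) / p) (ε : ℝ) (hε : 0 < ε) :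
    hashProb p (fun ab => |(sampleCount p S t ab : ℝ) / Pℓ - (U : ℝ)| > ε * U)
      ≤ 2 ^ (ℓ + 1) / (ε ^ 2 * U) := by
  subst hS hP
  have hp : (1 : ℝ) < p := by exact_mod_cast (Fact.out : p.Prime).one_lt
  have hpt : (p : ℝ) ≤ 2 ^ (ℓ + 1) * t := by
    rw [ht, pow_succ']; exact_mod_cast Nat.le_two_mul_mul_div (by positivity) hℓ
  have ht0 : 0 < t := ht ▸ Nat.div_pos hℓ (by positivity)
  set s : Finset (ZMod p) := {c | c.val < t}
  have hs : #s = t := by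
    rw [ZMod.card_filter_val_lt, min_eq_right (ht ▸ Nat.div_le_self _ _)]
  have hsample (ab : ZMod p × ZMod p) :
      sampleCount p S t ab = #{x ∈ S | ab.1 * x + ab.2 ∈ s} := by
    simp [sampleCount, s]
  have hdev := card_filter_lt_abs_div_sub_mul_le (card_pos.1 (hs ▸ ht0)) (card_pos.1 hU) hε.le
  simp only [hs, ZMod.card, ← hsample] at hdev
  rw [hashProb, filter_congr_decidable, div_le_div_iff₀ (by nlinarith) (by positivity)]
  -- `congr 1` closes the first factor because `hashPairs p` is `affineHashPairs (ZMod p)`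
  calc _ = _ * (ε ^ 2 * #S * (t / p)) * (p / t) := by rw [mul_assoc]; congr 1; field_simp
    _ ≤ (p - 1) * p * 2 ^ (ℓ + 1) :=
      mul_le_mul hdev ((div_le_iff₀ (by positivity)).2 hpt) (by positivity) (by nlinarith)
    _ = _ := by ring
end

section
/- Let 0 < δ < 1 and let β = ⌈24·ln(1/δ)⌉. Then the binomial tail ∑_{k > β/2} C(β, k)·(3/10)^k·(7/10)^{β−k} is at most δ, where the sum ranges over integers k with β/2 < k ≤ β. -/
/-!
For `k ≥ n / 2` and `p ≤ q`, every term `p ^ k * q ^ (n - k)` of the upper half of the binomial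
expansion is at most `√(p q) ^ n`; summing the binomial coefficients bounds the tail by
`(2 √(p q)) ^ n`. For `p = 3/10`, `q = 7/10` the base is `√(21/25) ≤ exp (-1/24)`, so
`24 · log (1/δ)` trials push the tail below `δ`.
-/

open Real Finset

lemma pow_mul_pow_sub_le_sqrt_mul_pow {p q : ℝ} (hp : 0 ≤ p) (hpq : p ≤ q) {n k : ℕ}
    (hnk : n ≤ 2 * k) (hkn : k ≤ n) : p ^ k * q ^ (n - k) ≤ √(p * q) ^ n := by
  obtain ⟨m, hm⟩ := Nat.exists_eq_add_of_le hnk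
  have hs : 0 ≤ √p := sqrt_nonneg p
  have hst : √p ≤ √q := sqrt_le_sqrt hpq
  have hp2 : p = √p ^ 2 := (sq_sqrt hp).symm
  have hq2 : q = √q ^ 2 := (sq_sqrt (hp.trans hpq)).symm
  have hmn : m ≤ n := by omega
  calc p ^ k * q ^ (n - k)
      = √p ^ n * (√p ^ m * √q ^ (n - m)) := by
        conv_lhs => rw [hp2, hq2]
        rw [← pow_mul, ← pow_mul, show 2 * k = n + m by omega,
          show 2 * (n - k) = n - m by omega, pow_add, mul_assoc]
    _ ≤ √p ^ n * (√q ^ m * √q ^ (n - m)) := by gcongr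
    _ = √(p * q) ^ n := by
        rw [← pow_add, Nat.add_sub_cancel' hmn, sqrt_mul hp, mul_pow]

lemma sum_choose_mul_pow_upper_half_le {p q : ℝ} (hp : 0 ≤ p) (hpq : p ≤ q) (n : ℕ) :
    ∑ k ∈ (range (n + 1)).filter (fun k : ℕ => (n : ℝ) / 2 < (k : ℝ)),
        (n.choose k : ℝ) * p ^ k * q ^ (n - k) ≤ (2 * √(p * q)) ^ n := by
  calc ∑ k ∈ (range (n + 1)).filter (fun k : ℕ => (n : ℝ) / 2 < (k : ℝ)),
          (n.choose k : ℝ) * p ^ k * q ^ (n - k)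
      ≤ ∑ k ∈ (range (n + 1)).filter (fun k : ℕ => (n : ℝ) / 2 < (k : ℝ)),
          (n.choose k : ℝ) * √(p * q) ^ n := by
        refine sum_le_sum fun k hk => ?_
        obtain ⟨hk_range, hhalf⟩ := mem_filter.mp hk
        have hnk : n ≤ 2 * k := by
          have : (n : ℝ) ≤ 2 * k := by linarith
          exact_mod_cast this
        rw [mul_assoc]
        gcongr
        exact pow_mul_pow_sub_le_sqrt_mul_pow hp hpq hnk (Nat.lt_succ_iff.mp (mem_range.mp hk_range))
    _ ≤ ∑ k ∈ range (n + 1), (n.choose k : ℝ) * √(p * q) ^ n :=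
        sum_le_sum_of_subset_of_nonneg (filter_subset _ _) fun _ _ _ => by positivity
    _ = (2 * √(p * q)) ^ n := by
        rw [← sum_mul, ← Nat.cast_sum, Nat.sum_range_choose, mul_pow]
        push_cast
        ring

lemma pow_le_of_le_exp_neg {r c δ : ℝ} (hr : 0 ≤ r) (hrc : r ≤ exp (-c)) (hδ : 0 < δ) {n : ℕ}
    (hn : log (1 / δ) ≤ c * n) : r ^ n ≤ δ :=
  calc r ^ n ≤ exp (-c) ^ n := by gcongr
    _ = exp (-(c * n)) := by rw [← exp_nat_mul]; ring_nf
    _ ≤ exp (-log (1 / δ)) := exp_le_exp.mpr (neg_le_neg hn)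
    _ = δ := by rw [one_div, log_inv, neg_neg, exp_log hδ]

lemma two_mul_sqrt_three_tenths_mul_seven_tenths_le :
    2 * √((3 / 10 : ℝ) * (7 / 10)) ≤ exp (-(1 / 24)) := by
  have hsq : (2 * √((3 / 10 : ℝ) * (7 / 10))) ^ 2 = 21 / 25 := by
    rw [mul_pow, sq_sqrt (by norm_num)]; norm_num
  -- `exp (-1/12) ≥ 1 - 1/12 > 21/25`
  have hexp : (21 / 25 : ℝ) ≤ exp (-(1 / 24)) ^ 2 := by
    rw [← exp_nat_mul]
    linarith [add_one_le_exp ((2 : ℕ) * -(1 / 24 : ℝ))]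
  exact (pow_le_pow_iff_left₀ (by positivity) (exp_nonneg _) two_ne_zero).mp (hsq ▸ hexp)

theorem stmt15_general (δ : ℝ) (hδ0 : 0 < δ) (β : ℕ)
    (hβ : β = ⌈24 * Real.log (1 / δ)⌉₊) :
    ∑ k ∈ (Finset.range (β + 1)).filter (fun k : ℕ => (β : ℝ) / 2 < (k : ℝ)),
        (β.choose k : ℝ) * (3 / 10) ^ k * (7 / 10) ^ (β - k) ≤ δ := by
  have hβ_large : Real.log (1 / δ) ≤ 1 / 24 * β := by
    have := Nat.le_ceil (24 * Real.log (1 / δ))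
    rw [← hβ] at this
    linarith
  exact (sum_choose_mul_pow_upper_half_le (by norm_num) (by norm_num) β).trans
    (pow_le_of_le_exp_neg (by positivity) two_mul_sqrt_three_tenths_mul_seven_tenths_le hδ0
      hβ_large)

/-- Let `0 < δ < 1` and `β = ⌈24·ln(1/δ)⌉`. Then the binomial tail
`∑_{β/2 < k ≤ β} C(β, k)·(3/10)^k·(7/10)^(β-k)` is at most `δ`. -/
theorem stmt15 (δ : ℝ) (hδ0 : 0 < δ) (hδ1 : δ < 1) (β : ℕ)
    (hβ : β = ⌈24 * Real.log (1 / δ)⌉₊) :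
    ∑ k ∈ (Finset.range (β + 1)).filter (fun k : ℕ => (β : ℝ) / 2 < (k : ℝ)),
        (β.choose k : ℝ) * (3 / 10) ^ k * (7 / 10) ^ (β - k) ≤ δ :=
  stmt15_general δ hδ0 β hβ
end
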